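/- For every k ≥ 0, the Prüfer phase function θ ↦ Ψ_k(θ) is strictly increasing on ℝ, and it satisfies Ψ_k(θ + 2π) = Ψ_k(θ) + 2(k+1)π for all θ ∈ ℝ. -/

import Mathlib

/-- The Prüfer phases: `Ψ_0(θ) = θ` and
`Ψ_{j+1}(θ) = Ψ_j(θ) + θ − 2 Im Log(1 − α_j e^{i Ψ_j(θ)})`, i.e.
`Ψ_j(θ) = (j+1)θ − 2 ∑_{i<j} Im Log(1 − α_i e^{i Ψ_i(θ)})`. -/
noncomputable def pruferPhase (α : ℕ → ℂ) (θ : ℝ) : ℕ → ℝ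
  | 0 => θ
  | j + 1 => pruferPhase α θ j + θ -
      2 * (Complex.log (1 - α j * Complex.exp (Complex.I * (pruferPhase α θ j : ℝ)))).im

/-!
Each step of the recursion is `Ψ_{j+1}(θ) = R_{α_j}(Ψ_j(θ)) + θ` with the circle map
`R_a(ψ) = ψ − 2 Im Log(1 − a e^{iψ})`. Writing `w = a e^{iψ}`, the derivative of `R_a` is the
Poisson kernel `Re((1 + w)/(1 − w)) = (1 − |w|²)/|1 − w|² > 0`, and `R_a(ψ) − ψ` is
`2π`-periodic. Both properties then propagate along the recursion by induction.
-/

open Complex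

noncomputable def pruferRotation (a : ℂ) (ψ : ℝ) : ℝ :=
  ψ - 2 * (log (1 - a * exp (I * ψ))).im

theorem pruferPhase_succ (α : ℕ → ℂ) (θ : ℝ) (j : ℕ) :
    pruferPhase α θ (j + 1) = pruferRotation (α j) (pruferPhase α θ j) + θ := by
  rw [pruferPhase, pruferRotation]
  ring

theorem Complex.norm_mul_exp_I_mul_ofReal (a : ℂ) (ψ : ℝ) : ‖a * exp (I * ψ)‖ = ‖a‖ := by
  rw [norm_mul, mul_comm I, norm_exp_ofReal_mul_I, mul_one]

theorem Complex.one_sub_mem_slitPlane {w : ℂ} (hw : ‖w‖ < 1) : 1 - w ∈ slitPlane := by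
  simpa [sub_eq_add_neg] using mem_slitPlane_of_norm_lt_one (z := -w) (by simpa using hw)

theorem Complex.re_one_add_div_one_sub_pos {w : ℂ} (hw : ‖w‖ < 1) :
    0 < ((1 + w) / (1 - w)).re := by
  have hw' : w.re * w.re + w.im * w.im < 1 := by
    rw [← normSq_apply, normSq_eq_norm_sq]
    nlinarith [norm_nonneg w]
  have hden : 0 < normSq (1 - w) := normSq_pos.mpr (slitPlane_ne_zero (one_sub_mem_slitPlane hw))
  rw [div_re, ← add_div]
  refine div_pos ?_ hden
  simp only [add_re, add_im, sub_re, sub_im, one_re, one_im]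
  nlinarith

theorem hasDerivAt_pruferRotation {a : ℂ} (ha : ‖a‖ < 1) (ψ : ℝ) :
    HasDerivAt (pruferRotation a)
      ((1 + a * exp (I * ψ)) / (1 - a * exp (I * ψ))).re ψ := by
  set w := a * exp (I * ψ) with hw_def
  have hslit : 1 - w ∈ slitPlane := one_sub_mem_slitPlane (by rwa [norm_mul_exp_I_mul_ofReal])
  have hinner : HasDerivAt (fun t : ℝ => 1 - a * exp (I * t)) (-(w * I)) ψ := by
    have := (((hasDerivAt_id ψ).ofReal_comp.const_mul I).cexp.const_mul a).const_sub 1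
    simpa [hw_def, mul_assoc, mul_comm, mul_left_comm] using this
  have hlog := (imCLM.hasFDerivAt.comp_hasDerivAt ψ (hinner.clog_real hslit)).const_mul 2
  refine ((hasDerivAt_id ψ).sub hlog).congr_deriv ?_
  have h1w : 1 - w ≠ 0 := slitPlane_ne_zero hslit
  have hsplit : (1 + w) / (1 - w) = 1 + 2 * (w / (1 - w)) := by field_simp; ring
  have him : (-(w * I) / (1 - w)).im = -(w / (1 - w)).re := by
    rw [show -(w * I) / (1 - w) = -I * (w / (1 - w)) by ring]
    simp
  rw [← hw_def, imCLM_apply, him, hsplit]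
  simp

theorem strictMono_pruferRotation {a : ℂ} (ha : ‖a‖ < 1) : StrictMono (pruferRotation a) := by
  refine strictMono_of_deriv_pos fun ψ => ?_
  rw [(hasDerivAt_pruferRotation ha ψ).deriv]
  exact re_one_add_div_one_sub_pos (by rwa [norm_mul_exp_I_mul_ofReal])

theorem pruferRotation_add_nat_mul_two_pi (a : ℂ) (ψ : ℝ) (n : ℕ) :
    pruferRotation a (ψ + n * (2 * Real.pi)) = pruferRotation a ψ + n * (2 * Real.pi) := by
  have hexp : exp (I * ↑(ψ + n * (2 * Real.pi))) = exp (I * ψ) := by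
    rw [← exp_periodic.nat_mul n (I * ψ)]
    push_cast
    ring_nf
  rw [pruferRotation, pruferRotation, hexp]
  ring

/-- For every `k`, the Prüfer phase `θ ↦ Ψ_k(θ)` is strictly increasing on `ℝ`
and satisfies `Ψ_k(θ + 2π) = Ψ_k(θ) + 2(k+1)π`. -/
theorem pruferPhase_strictMono_and_periodic (α : ℕ → ℂ)
    (hα : ∀ j, ‖α j‖ < 1) (k : ℕ) :
    StrictMono (fun θ : ℝ => pruferPhase α θ k) ∧
      ∀ θ : ℝ, pruferPhase α (θ + 2 * Real.pi) k
        = pruferPhase α θ k + 2 * (k + 1) * Real.pi := by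
  induction k with
  | zero => exact ⟨strictMono_id, fun θ => by simp only [pruferPhase]; ring⟩
  | succ j ih =>
    obtain ⟨hmono, hper⟩ := ih
    simp only [pruferPhase_succ]
    refine ⟨((strictMono_pruferRotation (hα j)).comp hmono).add strictMono_id, fun θ => ?_⟩
    rw [hper θ, show 2 * ((j : ℝ) + 1) * Real.pi = (j + 1 : ℕ) * (2 * Real.pi) by push_cast; ring,
      pruferRotation_add_nat_mul_two_pi]
    push_cast
    ring
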